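/- arXiv:2602.07911 — 2 statements merged into one kernel-verified Lean document; each statement's English description precedes it below -/
import Mathlib

section
/- If W_j = \tilde{W}_j / A_j for j = 1,...,m with \tilde{W}_j ≥ 0, A_j > 0, and Δ := max_j |A_j − 1| ≤ 1/2, then for every k, |W_{(k)} − \tilde{W}_{(k)}| ≤ 2Δ · \tilde{W}_{(1)}, where X_{(k)} denotes the k-th largest order statistic. -/
/-!
The `k`-th largest entry of a tuple is characterised by counting: `a ≤ w_(k)` iff more than `k`
entries of `w` are `≥ a`. Hence a uniform perturbation of size `ε` moves every order statistic by
at most `ε`, i.e. `w ↦ w_(k)` is 1-Lipschitz for the sup norm. Since `A_j ≥ 1/2`,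
`|W_j - W̃_j| = W̃_j |A_j - 1| / A_j ≤ 2 Δ W̃_j ≤ 2 Δ W̃_(1)` for every `j`.
-/

/-- The `(k+1)`-th largest element of the tuple `w` (so `kthLargest w 0` is the maximum). -/
noncomputable def kthLargest {m : ℕ} (w : Fin m → ℝ) (k : ℕ) : ℝ :=
  ((List.ofFn w).mergeSort (fun a b => decide (b ≤ a)))[k]!

open Finset

theorem List.countP_ofFn {α : Type*} {n : ℕ} (w : Fin n → α) (p : α → Prop) [DecidablePred p] :
    (List.ofFn w).countP (p ·) = #{j | p (w j)} := by
  rw [← Multiset.coe_countP, ← Fin.univ_val_map, Multiset.countP_map]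
  rfl

theorem le_kthLargest_iff {m : ℕ} (w : Fin m → ℝ) {k : ℕ} (hk : k < m) (a : ℝ) :
    a ≤ kthLargest w k ↔ k < #{j | a ≤ w j} := by
  set L := (List.ofFn w).mergeSort (fun a b => decide (b ≤ a))
  have hL : L.length = m := by simp [L]
  have hsorted : Antitone L.get := fun i j hij =>
    (List.pairwise_mergeSort' (· ≥ ·) (List.ofFn w)).rel_get_of_le hij
  have hcount : #{i | a ≤ L.get i} = #{j | a ≤ w j} := by
    rw [← List.countP_ofFn, List.ofFn_get, ← List.countP_ofFn]
    exact (List.mergeSort_perm _ _).countP_eq _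
  have hk' : k < L.length := hL ▸ hk
  rw [← hcount, kthLargest, getElem!_pos L k hk']
  exact (Tuple.lt_card_ge_iff_apply_ge_of_antitone (j := ⟨k, hk'⟩) hsorted).symm

theorem le_kthLargest_zero {m : ℕ} (w : Fin m → ℝ) (j : Fin m) : w j ≤ kthLargest w 0 :=
  (le_kthLargest_iff w j.pos _).2 (card_pos.2 ⟨j, by simp⟩)

theorem kthLargest_le_kthLargest_add {m : ℕ} {w v : Fin m → ℝ} {ε : ℝ}
    (h : ∀ j, w j ≤ v j + ε) {k : ℕ} (hk : k < m) :
    kthLargest w k ≤ kthLargest v k + ε := by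
  rw [← sub_le_iff_le_add, le_kthLargest_iff v hk]
  refine ((le_kthLargest_iff w hk _).1 le_rfl).trans_le (card_le_card fun j => ?_)
  simp only [mem_filter, mem_univ, true_and, sub_le_iff_le_add]
  exact fun hj => hj.trans (h j)

theorem abs_kthLargest_sub_kthLargest_le {m : ℕ} {w v : Fin m → ℝ} {ε : ℝ}
    (h : ∀ j, |w j - v j| ≤ ε) {k : ℕ} (hk : k < m) :
    |kthLargest w k - kthLargest v k| ≤ ε := by
  rw [abs_sub_le_iff, sub_le_iff_le_add', sub_le_iff_le_add']
  have hwv j := abs_sub_le_iff.1 (h j)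
  exact ⟨kthLargest_le_kthLargest_add (fun j => by linarith [hwv j]) hk,
    kthLargest_le_kthLargest_add (fun j => by linarith [hwv j]) hk⟩

theorem abs_div_sub_self_le {t a : ℝ} (ht : 0 ≤ t) (ha : |a - 1| ≤ 1 / 2) :
    |t / a - t| ≤ 2 * |a - 1| * t := by
  have ha_half : 1 / 2 ≤ a := by linarith [neg_abs_le (a - 1)]
  have ha_pos : 0 < a := by linarith
  calc |t / a - t| = t * |a - 1| / a := by
        rw [show t / a - t = t * (1 - a) / a by field_simp, abs_div, abs_mul, abs_of_nonneg ht,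
          abs_of_pos ha_pos, abs_sub_comm]
    _ ≤ t * |a - 1| / (1 / 2) := by gcongr
    _ = 2 * |a - 1| * t := by ring

theorem orderStat_perturbation_general {m : ℕ} (hm : 0 < m) (tW A : Fin m → ℝ)
    (htW : ∀ j, 0 ≤ tW j)
    (W : Fin m → ℝ) (hW : ∀ j, W j = tW j / A j)
    (Δ : ℝ)
    (hΔdef : Δ = (Finset.univ.sup' (Finset.univ_nonempty_iff.mpr ⟨⟨0, hm⟩⟩)
      (fun j => |A j - 1|)))
    (hΔhalf : Δ ≤ 1 / 2) :
    ∀ k : Fin m, |kthLargest W k.val - kthLargest tW k.val| ≤ 2 * Δ * kthLargest tW 0 := by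
  have hΔ j : |A j - 1| ≤ Δ := hΔdef ▸ le_sup' (fun j => |A j - 1|) (mem_univ j)
  intro k
  refine abs_kthLargest_sub_kthLargest_le (fun j => ?_) k.isLt
  calc |W j - tW j| = |tW j / A j - tW j| := by rw [hW]
    _ ≤ 2 * |A j - 1| * tW j := abs_div_sub_self_le (htW j) ((hΔ j).trans hΔhalf)
    _ ≤ 2 * Δ * kthLargest tW 0 :=
        mul_le_mul (by linarith [hΔ j]) (le_kthLargest_zero tW j) (htW j)
          (by linarith [(abs_nonneg _).trans (hΔ j)])

/-- If `W j = tW j / A j` with `tW j ≥ 0`, `A j > 0` and `Δ = max_j |A j − 1| ≤ 1/2`, then for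
every `k`, `|W_(k) − tW_(k)| ≤ 2 Δ tW_(1)` where `X_(k)` is the k-th largest order statistic. -/
theorem orderStat_perturbation {m : ℕ} (hm : 0 < m) (tW A : Fin m → ℝ)
    (htW : ∀ j, 0 ≤ tW j) (hA : ∀ j, 0 < A j)
    (W : Fin m → ℝ) (hW : ∀ j, W j = tW j / A j)
    (Δ : ℝ)
    (hΔdef : Δ = (Finset.univ.sup' (Finset.univ_nonempty_iff.mpr ⟨⟨0, hm⟩⟩)
      (fun j => |A j - 1|)))
    (hΔhalf : Δ ≤ 1 / 2) :
    ∀ k : Fin m, |kthLargest W k.val - kthLargest tW k.val| ≤ 2 * Δ * kthLargest tW 0 :=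
  orderStat_perturbation_general hm tW A htW W hW Δ hΔdef hΔhalf
end

section
/- Let X have a chi-squared distribution with r degrees of freedom (r ≥ 1). Then for every t > 0, P(X − r ≥ 2√(rt) + 2t) ≤ e^{−t} and P(r − X ≥ 2√(rt)) ≤ e^{−t}. -/
/-! Chernoff's method. The Gamma(a, λ) law has moment generating function `(λ / (λ - s)) ^ a` for
`s < λ`, so Markov's inequality applied to `exp (± s X)` bounds both tails of `χ²_r = Γ(r/2, 1/2)`.
With `b = √(r t)` and `u = 2b / r`, the choices `s = (b + t) / (r + 2b + 2t)` (upper tail) and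
`s = b / r` (lower tail) reduce the two bounds to `1 + u + u² / 2 ≤ exp u` and
`exp (u - u² / 2) ≤ 1 + u`. -/

open MeasureTheory ProbabilityTheory Real

/-- The chi-squared distribution with `r` degrees of freedom, as a Gamma distribution with
shape `r/2` and rate `1/2`. -/
noncomputable def chiSquared (r : ℕ) : Measure ℝ :=
  ProbabilityTheory.gammaMeasure (r / 2 : ℝ) (1 / 2 : ℝ)

lemma exp_sub_sq_div_two_le_one_add {u : ℝ} (hu : 0 ≤ u) : exp (u - u ^ 2 / 2) ≤ 1 + u := by
  rw [← le_log_iff_exp_le (by linarith)]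
  refine le_trans ?_ (le_log_one_add_of_nonneg hu)
  rw [le_div_iff₀ (by linarith)]
  nlinarith [pow_nonneg hu 3]

lemma measure_le_ofReal_exp_mul_lintegral_exp {α : Type*} [MeasurableSpace α] {ν : Measure α}
    {f : α → ℝ} (hf : Measurable f) (c : ℝ) :
    ν {x | c ≤ f x} ≤ ENNReal.ofReal (exp (-c)) * ∫⁻ x, ENNReal.ofReal (exp (f x)) ∂ν := by
  rw [← lintegral_const_mul' _ _ ENNReal.ofReal_ne_top]
  refine meas_le_lintegral₀ (by fun_prop) fun x (hx : c ≤ f x) => ?_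
  rw [← ENNReal.ofReal_mul (exp_nonneg _), ← exp_add]
  exact ENNReal.one_le_ofReal.2 (one_le_exp (by linarith))

lemma lintegral_exp_mul_gammaMeasure {a l s : ℝ} (ha : 0 < a) (hl : 0 < l) (hs : s < l) :
    ∫⁻ x, ENNReal.ofReal (exp (s * x)) ∂(gammaMeasure a l)
      = ENNReal.ofReal ((l / (l - s)) ^ a) := by
  have hls : 0 < l - s := by linarith
  have htilt : ∀ x, gammaPDF a l x * ENNReal.ofReal (exp (s * x))
      = ENNReal.ofReal ((l / (l - s)) ^ a) * gammaPDF a (l - s) x := by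
    intro x
    rcases lt_or_ge x 0 with hx | hx
    · simp [gammaPDF_of_neg hx]
    rw [gammaPDF_of_nonneg hx, gammaPDF_of_nonneg hx,
      ← ENNReal.ofReal_mul (by positivity), ← ENNReal.ofReal_mul (by positivity)]
    congr 1
    have hpow : l ^ a = (l / (l - s)) ^ a * (l - s) ^ a := by
      rw [← mul_rpow (by positivity) hls.le, div_mul_cancel₀ _ hls.ne']
    have hexp : exp (-(l * x)) * exp (s * x) = exp (-((l - s) * x)) := by
      rw [← exp_add]; ring_nf
    rw [hpow, ← hexp]
    ring
  have hmeas : Measurable fun x => ENNReal.ofReal (exp (s * x)) := by fun_prop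
  have hpdf : ∀ l, Measurable (gammaPDF a l) := fun l =>
    (measurable_gammaPDFReal a l).ennreal_ofReal
  rw [gammaMeasure, lintegral_withDensity_eq_lintegral_mul _ (hpdf l) hmeas]
  simp only [Pi.mul_apply, htilt]
  rw [lintegral_const_mul _ (hpdf (l - s)),
    lintegral_gammaPDF_eq_one ha hls, mul_one]

lemma gammaMeasure_Ici_le {a l s : ℝ} (ha : 0 < a) (hl : 0 < l) (hs : 0 ≤ s) (hsl : s < l)
    (z : ℝ) :
    gammaMeasure a l (Set.Ici z) ≤ ENNReal.ofReal (exp (-(s * z)) * (l / (l - s)) ^ a) := by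
  calc gammaMeasure a l (Set.Ici z)
      ≤ gammaMeasure a l {x | s * z ≤ s * x} :=
        measure_mono fun x (hx : z ≤ x) => mul_le_mul_of_nonneg_left hx hs
    _ ≤ _ := measure_le_ofReal_exp_mul_lintegral_exp (by fun_prop) _
    _ = _ := by
        rw [lintegral_exp_mul_gammaMeasure ha hl hsl, ← ENNReal.ofReal_mul (exp_nonneg _)]

lemma gammaMeasure_Iic_le {a l s : ℝ} (ha : 0 < a) (hl : 0 < l) (hs : 0 ≤ s) (z : ℝ) :
    gammaMeasure a l (Set.Iic z) ≤ ENNReal.ofReal (exp (s * z) * (l / (l + s)) ^ a) := by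
  calc gammaMeasure a l (Set.Iic z)
      ≤ gammaMeasure a l {x | -s * z ≤ -s * x} :=
        measure_mono fun x (hx : x ≤ z) => show -s * z ≤ -s * x by nlinarith
    _ ≤ _ := measure_le_ofReal_exp_mul_lintegral_exp (by fun_prop) _
    _ = _ := by
        rw [lintegral_exp_mul_gammaMeasure ha hl (by linarith), ← ENNReal.ofReal_mul (exp_nonneg _),
          neg_mul, neg_neg, sub_neg_eq_add]

lemma chiSquared_Ici_le {r : ℕ} (hr : 0 < r) {t : ℝ} (ht : 0 ≤ t) :
    chiSquared r (Set.Ici (r + (2 * √(r * t) + 2 * t))) ≤ ENNReal.ofReal (exp (-t)) := by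
  have hr' : (0 : ℝ) < r := Nat.cast_pos.2 hr
  set b := √(r * t)
  have hb : 0 ≤ b := sqrt_nonneg _
  have hbsq : b ^ 2 = r * t := sq_sqrt (by positivity)
  set s := (b + t) / (r + 2 * b + 2 * t) with hs_def
  have hs : 0 ≤ s := by positivity
  have hsl : s < 1 / 2 := by rw [div_lt_iff₀ (by positivity)]; linarith
  have hsz : s * (r + (2 * b + 2 * t)) = b + t := by rw [hs_def]; field_simp; ring
  have hratio : 1 / 2 / (1 / 2 - s) = 1 + 2 * b / r + (2 * b / r) ^ 2 / 2 := by
    have hgap : 1 / 2 - s = r / (2 * (r + 2 * b + 2 * t)) := by rw [hs_def]; field_simp; ring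
    rw [hgap, div_pow, mul_pow, hbsq]
    field_simp
  calc chiSquared r (Set.Ici (r + (2 * b + 2 * t)))
      ≤ ENNReal.ofReal (exp (-(s * (r + (2 * b + 2 * t)))) * (1 / 2 / (1 / 2 - s)) ^ (r / 2 : ℝ)) :=
        gammaMeasure_Ici_le (by positivity) one_half_pos hs hsl _
    _ ≤ ENNReal.ofReal (exp (-(b + t)) * exp (2 * b / r) ^ (r / 2 : ℝ)) := by
        rw [hsz, hratio]
        gcongr
        exact quadratic_le_exp_of_nonneg (by positivity)
    _ = ENNReal.ofReal (exp (-t)) := by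
        rw [← exp_mul, ← exp_add]
        congr 2
        field_simp
        ring

lemma chiSquared_Iic_le {r : ℕ} (hr : 0 < r) {t : ℝ} (ht : 0 ≤ t) :
    chiSquared r (Set.Iic (r - 2 * √(r * t))) ≤ ENNReal.ofReal (exp (-t)) := by
  have hr' : (0 : ℝ) < r := Nat.cast_pos.2 hr
  set b := √(r * t)
  have hb : 0 ≤ b := sqrt_nonneg _
  have hbsq : b ^ 2 = r * t := sq_sqrt (by positivity)
  set u := 2 * b / r with hu_def
  have hu : 0 ≤ u := by positivity
  have hratio : 1 / 2 / (1 / 2 + b / r) = (1 + u)⁻¹ := by rw [hu_def]; field_simp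
  calc chiSquared r (Set.Iic (r - 2 * b))
      ≤ ENNReal.ofReal (exp (b / r * (r - 2 * b)) * (1 / 2 / (1 / 2 + b / r)) ^ (r / 2 : ℝ)) :=
        gammaMeasure_Iic_le (by positivity) one_half_pos (by positivity) _
    _ ≤ ENNReal.ofReal (exp (b / r * (r - 2 * b)) * exp (-(u - u ^ 2 / 2)) ^ (r / 2 : ℝ)) := by
        rw [hratio, exp_neg]
        gcongr
        exact exp_sub_sq_div_two_le_one_add hu
    _ = ENNReal.ofReal (exp (-t)) := by
        rw [← exp_mul, ← exp_add]
        congr 2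
        rw [hu_def]
        field_simp
        linear_combination -hbsq

theorem chiSquared_laurent_massart_general {Ω : Type*} [MeasurableSpace Ω]
    (μ : Measure Ω)
    (r : ℕ) (hr : 1 ≤ r) (X : Ω → ℝ) (hX : μ.map X = chiSquared r) :
    ∀ t : ℝ, 0 < t →
      μ {ω | 2 * Real.sqrt (r * t) + 2 * t ≤ X ω - r} ≤ ENNReal.ofReal (Real.exp (-t)) ∧
      μ {ω | 2 * Real.sqrt (r * t) ≤ (r : ℝ) - X ω} ≤ ENNReal.ofReal (Real.exp (-t)) := by
  intro t ht
  have : IsProbabilityMeasure (chiSquared r) :=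
    isProbabilityMeasure_gammaMeasure (by positivity) one_half_pos
  have hXm : AEMeasurable X μ := aemeasurable_of_map_neZero (by rw [hX]; infer_instance)
  have hlaw {s : Set ℝ} (hs : MeasurableSet s) : μ (X ⁻¹' s) = chiSquared r s := by
    rw [← hX, Measure.map_apply_of_aemeasurable hXm hs]
  constructor
  · calc μ {ω | 2 * √(r * t) + 2 * t ≤ X ω - r}
        = μ (X ⁻¹' Set.Ici (r + (2 * √(r * t) + 2 * t))) := by simp_rw [le_sub_iff_add_le']; rfl
      _ ≤ _ := (hlaw measurableSet_Ici).trans_le (chiSquared_Ici_le hr ht.le)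
  · calc μ {ω | 2 * √(r * t) ≤ r - X ω}
        = μ (X ⁻¹' Set.Iic (r - 2 * √(r * t))) := by simp_rw [le_sub_comm]; rfl
      _ ≤ _ := (hlaw measurableSet_Iic).trans_le (chiSquared_Iic_le hr ht.le)

/-- Laurent–Massart tail bounds for the chi-squared distribution with `r ≥ 1` degrees of
freedom: for every `t > 0`, `P(X − r ≥ 2√(rt) + 2t) ≤ e^{−t}` and
`P(r − X ≥ 2√(rt)) ≤ e^{−t}`. -/
theorem chiSquared_laurent_massart {Ω : Type*} [MeasurableSpace Ω]
    (μ : Measure Ω) [IsProbabilityMeasure μ]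
    (r : ℕ) (hr : 1 ≤ r) (X : Ω → ℝ) (hX : μ.map X = chiSquared r) :
    ∀ t : ℝ, 0 < t →
      μ {ω | 2 * Real.sqrt (r * t) + 2 * t ≤ X ω - r} ≤ ENNReal.ofReal (Real.exp (-t)) ∧
      μ {ω | 2 * Real.sqrt (r * t) ≤ (r : ℝ) - X ω} ≤ ENNReal.ofReal (Real.exp (-t)) :=
  chiSquared_laurent_massart_general μ r hr X hX
end
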